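/- If A ⊆ ℝ^n is an F_σ set and dim_H(A) denotes its Hausdorff dimension, then the topological (small inductive) dimension of A is at most dim_H(A); moreover if dim_T(A) ≥ m then some coordinate projection π : ℝ^n → ℝ^m maps A onto a set with nonempty interior, hence of Hausdorff dimension m. -/

import Mathlib

open scoped ENNReal

/-- `IndLE k A` says that the small inductive (topological) dimension of `A` is at most
`k - 1`; in particular `IndLE 0 A` means `A = ∅` (dimension `-∞`), and `¬ IndLE m A` means
that the topological dimension of `A` is at least `m`. -/
def IndLE {X : Type*} [TopologicalSpace X] : ℕ → Set X → Prop
  | 0, A => A = ∅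
  | (k + 1), A => ∀ x ∈ A, ∀ U ∈ nhds x, ∃ V ∈ nhds x, closure V ⊆ U ∧
      IndLE k (frontier V ∩ A)

/-!
Nöbeling's argument, by induction on `m`. Suppose every projection of the σ-compact set `A`
onto `m + 1` coordinates has empty interior. Writing such a projection as `z ↦ (z i, π z)` with
`π` a projection onto `m` other coordinates, a Kuratowski–Ulam type argument shows that for all
but a meagre set of levels `t`, the projection `π (A ∩ {z i = t})` has empty interior. Around any
point of `A` we can therefore find arbitrarily small boxes all of whose faces lie at such levels.
Every projection onto `m` coordinates maps the part of `A` on the boundary of such a box to a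
finite union of meagre sets, which has empty interior by Baire's theorem, so the induction
hypothesis applies to the boundary. The Hausdorff dimension bound follows because coordinate
projections are Lipschitz and a subset of `ℝ^m` with nonempty interior has dimension `m`.
-/

open Set Topology Metric

section

variable {X : Type*} [TopologicalSpace X] {s M : Set X}

lemma IsOpen.exists_mem_notMem_of_isMeagre [BaireSpace X] (hs : IsOpen s) (hne : s.Nonempty)
    (hM : IsMeagre M) : ∃ x ∈ s, x ∉ M := by
  by_contra! h
  exact not_isMeagre_of_isOpen hs hne (hM.mono h)

lemma IsMeagre.interior_eq_empty [BaireSpace X] (hM : IsMeagre M) : interior M = ∅ := by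
  by_contra h
  exact not_isMeagre_of_isOpen isOpen_interior (nonempty_iff_ne_empty.2 h)
    (hM.mono interior_subset)

lemma IsClosed.isMeagre_of_interior_eq_empty (hs : IsClosed s) (h : interior s = ∅) :
    IsMeagre s :=
  (hs.isNowhereDense_iff.2 h).isMeagre

lemma IsSigmaCompact.isMeagre_of_interior_eq_empty [T2Space X] (hs : IsSigmaCompact s)
    (h : interior s = ∅) : IsMeagre s := by
  obtain ⟨K, hK, rfl⟩ := hs
  refine isMeagre_iUnion fun j => (hK j).isClosed.isMeagre_of_interior_eq_empty ?_
  exact eq_empty_of_subset_empty (h ▸ interior_mono (subset_iUnion K j))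

lemma IsSigmaCompact.inter_isClosed {t : Set X} (hs : IsSigmaCompact s) (ht : IsClosed t) :
    IsSigmaCompact (s ∩ t) := by
  obtain ⟨K, hK, rfl⟩ := hs
  rw [iUnion_inter]
  exact isSigmaCompact_iUnion_of_isCompact _ fun j => (hK j).inter_right ht

end

/-- A weak form of the Kuratowski–Ulam theorem. -/
lemma IsSigmaCompact.isMeagre_setOf_interior_preimage_mk_nonempty {X Y : Type*}
    [TopologicalSpace X] [TopologicalSpace Y] [T2Space X] [T2Space Y] [SecondCountableTopology Y]
    [BaireSpace Y] {B : Set (X × Y)} (hB : IsSigmaCompact B) (hint : interior B = ∅) :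
    IsMeagre {x | (interior (Prod.mk x ⁻¹' B)).Nonempty} := by
  obtain ⟨K, hK, rfl⟩ := hB
  let basis := TopologicalSpace.countableBasis Y
  let T : ℕ → Set Y → Set X := fun j u => {x | u ⊆ Prod.mk x ⁻¹' K j}
  have hT_closed : ∀ j u, IsClosed (T j u) := fun j u => by
    have hT : T j u = ⋂ y ∈ u, (fun x => (x, y)) ⁻¹' K j := by ext; simp [T, subset_def]
    rw [hT]
    exact isClosed_biInter fun y _ => (hK j).isClosed.preimage (by fun_prop)
  have hT_interior : ∀ j, ∀ u ∈ basis, u.Nonempty → interior (T j u) = ∅ := by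
    intro j u hu hne
    have hprod : interior (T j u) ×ˢ u ⊆ interior (⋃ j, K j) :=
      interior_maximal (fun p hp => mem_iUnion.2 ⟨j, interior_subset hp.1 hp.2⟩)
        (isOpen_interior.prod (TopologicalSpace.isOpen_of_mem_countableBasis hu))
    rw [hint, subset_empty_iff, prod_eq_empty_iff] at hprod
    exact hprod.resolve_right hne.ne_empty
  have hcover : {x | (interior (Prod.mk x ⁻¹' ⋃ j, K j)).Nonempty} ⊆
      ⋃ j, ⋃ u ∈ {u ∈ basis | u.Nonempty}, T j u := by
    intro x hx
    obtain ⟨j, y, hy⟩ : ∃ j, (interior (Prod.mk x ⁻¹' K j)).Nonempty := by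
      by_contra! h
      refine (nonempty_iff_ne_empty.1 hx) (IsMeagre.interior_eq_empty ?_)
      rw [preimage_iUnion]
      exact isMeagre_iUnion fun j =>
        ((hK j).isClosed.preimage (by fun_prop)).isMeagre_of_interior_eq_empty (h j)
    obtain ⟨u, hu, hyu, hsub⟩ :=
      (TopologicalSpace.isBasis_countableBasis Y).exists_subset_of_mem_open hy isOpen_interior
    exact mem_iUnion.2 ⟨j, mem_iUnion₂.2 ⟨u, ⟨hu, y, hyu⟩, hsub.trans interior_subset⟩⟩
  refine IsMeagre.mono hcover (isMeagre_iUnion fun j => isMeagre_biUnion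
    ((TopologicalSpace.countable_countableBasis Y).mono (sep_subset _ _)) fun u hu => ?_)
  exact (hT_closed j u).isMeagre_of_interior_eq_empty (hT_interior j u hu.1 hu.2)

lemma closure_pi_Ioo_subset {ι : Type*} (a b : ι → ℝ) :
    closure (univ.pi fun i => Ioo (a i) (b i)) ⊆ univ.pi fun i => Icc (a i) (b i) :=
  closure_minimal (pi_mono fun _ _ => Ioo_subset_Icc_self) (isClosed_set_pi fun _ _ => isClosed_Icc)

lemma frontier_pi_Ioo_subset {ι : Type*} [Finite ι] (a b : ι → ℝ) :
    frontier (univ.pi fun i => Ioo (a i) (b i)) ⊆ {z | ∃ i, z i = a i ∨ z i = b i} := by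
  intro z hz
  show ∃ i, z i = a i ∨ z i = b i
  have hIcc := closure_pi_Ioo_subset a b hz.1
  have hIoo : z ∉ univ.pi fun i => Ioo (a i) (b i) := by
    rw [← (isOpen_set_pi finite_univ fun _ _ => isOpen_Ioo).interior_eq]
    exact hz.2
  by_contra! h
  exact hIoo fun i _ => ⟨(hIcc i trivial).1.lt_of_ne (h i).1.symm,
    (hIcc i trivial).2.lt_of_ne (h i).2⟩

lemma exists_nhds_frontier_subset_of_isMeagre {ι : Type*} [Fintype ι] {M : ι → Set ℝ}
    (hM : ∀ i, IsMeagre (M i)) {x : ι → ℝ} {U : Set (ι → ℝ)} (hU : U ∈ 𝓝 x) :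
    ∃ V ∈ 𝓝 x, closure V ⊆ U ∧ ∃ a b : ι → ℝ, (∀ i, a i ∉ M i ∧ b i ∉ M i) ∧
      frontier V ⊆ {z | ∃ i, z i = a i ∨ z i = b i} := by
  obtain ⟨ε, hε, hεU⟩ := nhds_basis_closedBall.mem_iff.1 hU
  choose a ha haM using fun i => isOpen_Ioo.exists_mem_notMem_of_isMeagre
    (nonempty_Ioo.2 (sub_lt_self (x i) hε)) (hM i)
  choose b hb hbM using fun i => isOpen_Ioo.exists_mem_notMem_of_isMeagre
    (nonempty_Ioo.2 (lt_add_of_pos_right (x i) hε)) (hM i)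
  refine ⟨univ.pi fun i => Ioo (a i) (b i),
    (isOpen_set_pi finite_univ fun _ _ => isOpen_Ioo).mem_nhds fun i _ => ⟨(ha i).2, (hb i).1⟩,
    ?_, a, b, fun i => ⟨haM i, hbM i⟩, frontier_pi_Ioo_subset a b⟩
  calc closure _ ⊆ univ.pi fun i => Icc (a i) (b i) := closure_pi_Ioo_subset a b
    _ ⊆ closedBall x ε := by
      rw [closedBall_pi x hε.le]
      exact pi_mono fun i _ => by
        rw [Real.closedBall_eq_Icc]
        exact Icc_subset_Icc (ha i).1.le (hb i).2.le
    _ ⊆ U := hεU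

section

variable {n m : ℕ}

lemma interior_setOf_apply_eq (j : Fin m) (t : ℝ) : interior {y : Fin m → ℝ | y j = t} = ∅ := by
  have h := (isOpenMap_eval (X := fun _ : Fin m => ℝ) j).preimage_interior_eq_interior_preimage
    (continuous_apply j) ({t} : Set ℝ)
  rw [interior_singleton, preimage_empty] at h
  exact h.symm

lemma isMeagre_setOf_interior_image_inter_nonempty {A : Set (Fin n → ℝ)} (hA : IsSigmaCompact A)
    (hint : ∀ e : Fin (m + 1) ↪ Fin n, interior ((fun x => x ∘ e) '' A) = ∅)
    (e : Fin m ↪ Fin n) {i : Fin n} (hi : i ∉ range e) :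
    IsMeagre {t : ℝ | (interior ((fun x => x ∘ e) '' (A ∩ {z | z i = t}))).Nonempty} := by
  let e' : Fin (m + 1) ↪ Fin n := ⟨Fin.cons i e, Fin.cons_injective_of_injective hi e.injective⟩
  let B := (fun z : Fin n → ℝ => (z i, z ∘ e)) '' A
  have hB_slice : ∀ t, Prod.mk t ⁻¹' B = (fun x => x ∘ e) '' (A ∩ {z | z i = t}) := by
    intro t
    ext y
    simp [B, and_assoc]
  let cons := (Fin.consEquivL ℝ fun _ : Fin (m + 1) => ℝ).toHomeomorph
  have hB_cons : cons '' B = (fun x => x ∘ e') '' A := by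
    simp only [B, cons, image_image, e', Function.Embedding.coeFn_mk, Fin.comp_cons]
    rfl
  have hB : interior B = ∅ := by
    rw [← image_eq_empty (f := cons), cons.image_interior, hB_cons, hint e']
  simp_rw [← hB_slice]
  exact (hA.image (by fun_prop)).isMeagre_setOf_interior_preimage_mk_nonempty hB

lemma isMeagre_image_inter_setOf_apply_eq {A : Set (Fin n → ℝ)} (hA : IsSigmaCompact A)
    (e : Fin m ↪ Fin n) {i : Fin n} {t : ℝ}
    (ht : i ∉ range e → interior ((fun x => x ∘ e) '' (A ∩ {z | z i = t})) = ∅) :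
    IsMeagre ((fun x => x ∘ e) '' (A ∩ {z | z i = t})) := by
  by_cases hi : i ∈ range e
  · obtain ⟨j, rfl⟩ := hi
    refine ((isClosed_eq (continuous_apply j) continuous_const).isMeagre_of_interior_eq_empty
      (interior_setOf_apply_eq j t)).mono ?_
    rintro _ ⟨z, ⟨-, hz⟩, rfl⟩
    exact hz
  · exact ((hA.inter_isClosed (isClosed_eq (continuous_apply i) continuous_const)).image
      (by fun_prop)).isMeagre_of_interior_eq_empty (ht hi)

theorem indLE_of_forall_interior_image_eq_empty :
    ∀ (m : ℕ) {A : Set (Fin n → ℝ)}, IsSigmaCompact A →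
      (∀ e : Fin m ↪ Fin n, interior ((fun x => x ∘ e) '' A) = ∅) → IndLE m A
  | 0, A, _, hint => by
    show A = ∅
    by_contra hA
    have h := hint Function.Embedding.ofIsEmpty
    rw [((nonempty_iff_ne_empty.2 hA).image _).eq_univ, interior_univ] at h
    exact univ_nonempty.ne_empty h
  | m + 1, A, hA, hint => by
    intro x _ U hU
    let bad : Fin n → Set ℝ := fun i => ⋃ (e : Fin m ↪ Fin n) (_ : i ∉ range e),
      {t | (interior ((fun x => x ∘ e) '' (A ∩ {z | z i = t}))).Nonempty}
    have hbad : ∀ i, IsMeagre (bad i) := fun i => isMeagre_iUnion fun e => isMeagre_iUnion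
      fun hi => isMeagre_setOf_interior_image_inter_nonempty hA hint e hi
    obtain ⟨V, hV, hVU, a, b, hab, hfr⟩ := exists_nhds_frontier_subset_of_isMeagre hbad hU
    refine ⟨V, hV, hVU, indLE_of_forall_interior_image_eq_empty m
      (inter_comm A _ ▸ hA.inter_isClosed isClosed_frontier) fun e => ?_⟩
    have hface : ∀ i, ∀ t ∉ bad i, IsMeagre ((fun x => x ∘ e) '' (A ∩ {z | z i = t})) :=
      fun i t ht => isMeagre_image_inter_setOf_apply_eq hA e fun hi =>
        not_nonempty_iff_eq_empty.1 fun hne => ht (mem_iUnion₂.2 ⟨e, hi, hne⟩)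
    refine IsMeagre.interior_eq_empty ((isMeagre_iUnion fun i =>
      (hface i _ (hab i).1).union (hface i _ (hab i).2)).mono ?_)
    rintro _ ⟨z, ⟨hzV, hzA⟩, rfl⟩
    obtain ⟨i, hi | hi⟩ := hfr hzV
    exacts [mem_iUnion.2 ⟨i, .inl ⟨z, ⟨hzA, hi⟩, rfl⟩⟩, mem_iUnion.2 ⟨i, .inr ⟨z, ⟨hzA, hi⟩, rfl⟩⟩]

end

theorem stmt19 {n : ℕ} (A : Set (Fin n → ℝ))
    (hA : ∃ F : ℕ → Set (Fin n → ℝ), (∀ i, IsClosed (F i)) ∧ A = ⋃ i, F i)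
    (m : ℕ) (hm : ¬ IndLE m A) :
    (m : ℝ≥0∞) ≤ dimH A ∧
    ∃ e : Fin m ↪ Fin n, (interior ((fun x => x ∘ e) '' A)).Nonempty ∧
      dimH ((fun x => x ∘ e) '' A) = (m : ℝ≥0∞) := by
  obtain ⟨F, hF, rfl⟩ := hA
  have hσ : IsSigmaCompact (⋃ i, F i) := isSigmaCompact_iUnion _ fun i =>
    isSigmaCompact_univ.of_isClosed_subset (hF i) (subset_univ _)
  obtain ⟨e, he⟩ : ∃ e : Fin m ↪ Fin n, (interior ((fun x => x ∘ e) '' ⋃ i, F i)).Nonempty := by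
    by_contra! h
    exact hm (indLE_of_forall_interior_image_eq_empty m hσ h)
  have hdim : dimH ((fun x => x ∘ e) '' ⋃ i, F i) = m := by
    rw [Real.dimH_of_nonempty_interior he, Module.finrank_fintype_fun_eq_card, Fintype.card_fin]
  refine ⟨hdim ▸ ?_, e, he, hdim⟩
  exact (LinearMap.funLeft ℝ ℝ e).toContinuousLinearMap.lipschitz.dimH_image_le _
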